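/- Let p be a prime and n = (p^p - 1)/(p - 1). The greatest common divisor of the polynomials (x + λ)^n - 1 for λ = 0, 1, …, p-1 in 𝔽_p[x] equals x^p - x - 1. In particular, exactly p elements α of the algebraic closure of 𝔽_p satisfy (α + λ)^n = 1 for all λ ∈ 𝔽_p, namely the roots of x^p - x - 1. -/

import Mathlib

/-!
Write `n = 1 + p + ⋯ + p ^ (p - 1)`. If `s ^ p = s + 1` then `s ^ p ^ i = s + i`, so
`s ^ n = ∏_{i<p} (s + i) = s ^ p - s = 1`; as `s ↦ s + λ` preserves `s ^ p = s + 1`, every root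
of `X ^ p - X - 1` is a common root of the `(X + λ) ^ n - 1`. Conversely, if `(α + λ) ^ n = 1` for
all `λ ∈ 𝔽_p`, the monic polynomial `f = ∏_{i<p} (X + α ^ p ^ i)` of degree `p` takes the value
`(α + λ) ^ n = 1` at every `λ ∈ 𝔽_p`, hence `f = X ^ p - X + 1`, and `f(-α) = 0` gives
`α ^ p = α + 1`. Since `n ≡ 1 mod p`, the gcd divides the separable `X ^ n - 1`, so it is determined
by its roots in the algebraic closure, which are those of `X ^ p - X - 1`.
-/

open Polynomial Finset

namespace Polynomial

theorem Separable.dvd_of_forall_aeval_eq_zero {F K : Type*} [Field F] [Field K] [IsAlgClosed K]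
    [Algebra F K] {f g : F[X]} (hf : f.Separable) (h : ∀ a : K, aeval a f = 0 → aeval a g = 0) :
    f ∣ g := by
  rw [← map_dvd_map' (algebraMap F K)]
  rcases eq_or_ne g 0 with rfl | hg
  · simp
  refine (IsAlgClosed.splits _).dvd_of_roots_le_roots (map_ne_zero hf.ne_zero) ?_
  rw [Multiset.le_iff_subset (nodup_roots hf.map)]
  intro a ha
  rw [mem_roots (map_ne_zero hf.ne_zero), IsRoot, eval_map_algebraMap] at ha
  rw [mem_roots (map_ne_zero hg), IsRoot, eval_map_algebraMap]
  exact h a ha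

section XPowSubXSubC

variable {R : Type*} [CommRing R]

theorem monic_X_pow_sub_X_sub_C [Nontrivial R] {n : ℕ} (hn : 1 < n) (a : R) :
    (X ^ n - X - C a).Monic := by
  rw [sub_sub]
  exact monic_X_pow_sub (by rw [degree_X_add_C]; exact_mod_cast hn)

theorem natDegree_X_pow_sub_X_sub_C [Nontrivial R] {n : ℕ} (hn : 1 < n) (a : R) :
    (X ^ n - X - C a).natDegree = n := by
  rw [sub_sub, natDegree_sub_eq_left_of_natDegree_lt] <;> simp [hn]

theorem separable_X_pow_sub_X_sub_C (p : ℕ) [CharP R p] (a : R) :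
    (X ^ p - X - C a).Separable := by
  rw [separable_def, show derivative (X ^ p - X - C a) = -1 by
    simp [derivative_X_pow, CharP.cast_eq_zero]]
  exact isCoprime_one_right.neg_right

end XPowSubXSubC

end Polynomial

namespace ZMod

variable {p : ℕ} [Fact p.Prime]

theorem prod_univ_eq_prod_range {M : Type*} [CommMonoid M] (f : ZMod p → M) :
    ∏ c, f c = ∏ i ∈ range p, f i :=
  prod_nbij' val Nat.cast (by simp [val_lt]) (by simp) (by simp)
    (fun i hi => val_cast_of_lt (mem_range.1 hi)) (by simp)

theorem prod_X_sub_C : ∏ c : ZMod p, (X - C c) = X ^ p - X := by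
  have hp : p.Prime := Fact.out
  have hroots := FiniteField.roots_X_pow_card_sub_X (ZMod p)
  rw [card] at hroots
  have hdeg : (X ^ p - X : (ZMod p)[X]).natDegree = p :=
    FiniteField.X_pow_card_sub_X_natDegree_eq _ hp.one_lt
  have hmonic : (X ^ p - X : (ZMod p)[X]).Monic := by
    simpa using monic_X_pow_sub_X_sub_C hp.one_lt (0 : ZMod p)
  rw [(splits_iff_card_roots.2 (by simp [hroots, hdeg])).eq_prod_roots_of_monic hmonic, hroots]
  rfl

theorem prod_X_add_C : ∏ c : ZMod p, (X + C c) = X ^ p - X := by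
  rw [← prod_X_sub_C]
  exact Fintype.prod_equiv (Equiv.neg _) _ _ fun c => by simp [sub_eq_add_neg]

theorem natCast_sum_range_pow : ((∑ i ∈ range p, p ^ i : ℕ) : ZMod p) = 1 := by
  simp [zero_pow_eq, (Fact.out : p.Prime).pos]

end ZMod

section

variable {p : ℕ} [Fact p.Prime] {K : Type*} [Field K] [Algebra (ZMod p) K]

theorem prod_add_algebraMap_zmod (s : K) :
    ∏ c : ZMod p, (s + algebraMap (ZMod p) K c) = s ^ p - s := by
  simpa [eval_prod] using congr_arg (eval s ∘ map (algebraMap (ZMod p) K)) ZMod.prod_X_add_C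

theorem algebraMap_zmod_pow_pow (c : ZMod p) (i : ℕ) :
    algebraMap (ZMod p) K c ^ p ^ i = algebraMap (ZMod p) K c := by
  rw [← map_pow, ZMod.pow_card_pow]

theorem pow_pow_eq_add_of_pow_eq_add_one {s : K} (hs : s ^ p = s + 1) (i : ℕ) :
    s ^ p ^ i = s + i := by
  have := charP_of_injective_algebraMap' (ZMod p) (A := K) p
  induction i with
  | zero => simp
  | succ i ih =>
    have hi : (i : K) ^ p = i := by
      rw [← map_natCast (algebraMap (ZMod p) K), ← map_pow, ZMod.pow_card]
    rw [pow_succ, pow_mul, ih, add_pow_char, hs, hi]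
    push_cast
    ring

theorem pow_sum_range_pow_eq_one_of_pow_eq_add_one {s : K} (hs : s ^ p = s + 1) :
    s ^ ∑ i ∈ range p, p ^ i = 1 := by
  rw [← prod_pow_eq_pow_sum, prod_congr rfl fun i _ => pow_pow_eq_add_of_pow_eq_add_one hs i,
    show ∏ i ∈ range p, (s + i) = ∏ c : ZMod p, (s + algebraMap (ZMod p) K c) by
    simp [ZMod.prod_univ_eq_prod_range], prod_add_algebraMap_zmod, hs, add_sub_cancel_left]

theorem pow_eq_add_one_of_forall_add_pow_sum_range_pow_eq_one {α : K}
    (h : ∀ c : ZMod p, (α + algebraMap (ZMod p) K c) ^ ∑ i ∈ range p, p ^ i = 1) :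
    α ^ p = α + 1 := by
  have := charP_of_injective_algebraMap' (ZMod p) (A := K) p
  have hp : p.Prime := Fact.out
  set f : K[X] := ∏ i ∈ range p, (X + C (α ^ p ^ i))
  have hf_monic : f.Monic := monic_prod_of_monic _ _ fun i _ => monic_X_add_C _
  have hf_deg : f.natDegree = p := by
    rw [natDegree_prod_of_monic _ _ fun i _ => monic_X_add_C _]
    simp only [natDegree_X_add_C, sum_const, card_range, smul_eq_mul, mul_one]
  have hf_eval (c : ZMod p) : f.eval (algebraMap (ZMod p) K c) = 1 := by
    rw [← h c, ← prod_pow_eq_pow_sum, eval_prod]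
    refine prod_congr rfl fun i _ => ?_
    rw [eval_add, eval_X, eval_C, add_pow_char_pow, algebraMap_zmod_pow_pow, add_comm]
  have hmonic := monic_X_pow_sub_X_sub_C hp.one_lt (-1 : K)
  have hf_eq : f = X ^ p - X - C (-1) := by
    refine eq_of_degree_sub_lt_of_eval_finset_eq
      (univ.map ⟨_, (algebraMap (ZMod p) K).injective⟩) ?_ (by simp [hf_eval, ← map_pow])
    have hdeg : f.degree = (X ^ p - X - C (-1) : K[X]).degree := by
      rw [degree_eq_natDegree hf_monic.ne_zero, degree_eq_natDegree hmonic.ne_zero, hf_deg,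
        natDegree_X_pow_sub_X_sub_C hp.one_lt]
    convert degree_sub_lt_left hdeg hf_monic.ne_zero
      (by rw [hf_monic.leadingCoeff, hmonic.leadingCoeff])
    rw [card_map, card_univ, ZMod.card, degree_eq_natDegree hf_monic.ne_zero, hf_deg]
  have h_neg := congr_arg (eval (-α)) hf_eq
  rw [eval_prod, prod_eq_zero (mem_range.2 hp.pos) (by simp)] at h_neg
  simp only [eval_sub, eval_pow, eval_X, eval_C, neg_pow α, neg_one_pow_char] at h_neg
  linear_combination h_neg

theorem forall_add_pow_sum_range_pow_eq_one_iff (α : K) :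
    (∀ c : ZMod p, (α + algebraMap (ZMod p) K c) ^ ∑ i ∈ range p, p ^ i = 1) ↔
      α ^ p = α + 1 := by
  have := charP_of_injective_algebraMap' (ZMod p) (A := K) p
  refine ⟨pow_eq_add_one_of_forall_add_pow_sum_range_pow_eq_one, fun hα c => ?_⟩
  refine pow_sum_range_pow_eq_one_of_pow_eq_add_one ?_
  rw [add_pow_char, hα, ← map_pow, ZMod.pow_card]
  ring

theorem aeval_X_pow_sub_X_sub_one_eq_zero_iff (α : K) :
    aeval α (X ^ p - X - 1 : (ZMod p)[X]) = 0 ↔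
      ∀ c : ZMod p, (α + algebraMap (ZMod p) K c) ^ ∑ i ∈ range p, p ^ i = 1 := by
  rw [forall_add_pow_sum_range_pow_eq_one_iff, ← sub_eq_zero (b := α + 1)]
  simp [sub_sub]

end

section

variable {p : ℕ} [Fact p.Prime]

theorem separable_X_pow_sub_X_sub_one : (X ^ p - X - 1 : (ZMod p)[X]).Separable := by
  simpa using separable_X_pow_sub_X_sub_C p (1 : ZMod p)

theorem monic_X_pow_sub_X_sub_one : (X ^ p - X - 1 : (ZMod p)[X]).Monic := by
  simpa using monic_X_pow_sub_X_sub_C (Fact.out : p.Prime).one_lt (1 : ZMod p)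

theorem aeval_X_add_C_pow_sub_one_eq_zero_iff {K : Type*} [Field K] [Algebra (ZMod p) K]
    (α : K) (c : ZMod p) (n : ℕ) :
    aeval α ((X + C c) ^ n - 1) = 0 ↔ (α + algebraMap (ZMod p) K c) ^ n = 1 := by
  simp [sub_eq_zero]

theorem X_pow_sub_X_sub_one_dvd (c : ZMod p) :
    X ^ p - X - 1 ∣ (X + C c) ^ ∑ i ∈ range p, p ^ i - 1 :=
  separable_X_pow_sub_X_sub_one.dvd_of_forall_aeval_eq_zero (K := AlgebraicClosure (ZMod p))
    fun α hα => by
      rw [aeval_X_add_C_pow_sub_one_eq_zero_iff]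
      exact (aeval_X_pow_sub_X_sub_one_eq_zero_iff α).1 hα c

theorem gcd_X_add_C_pow_sum_range_pow_sub_one :
    univ.gcd (fun c : ZMod p => (X + C c) ^ ∑ i ∈ range p, p ^ i - 1) = X ^ p - X - 1 := by
  set G := univ.gcd (fun c : ZMod p => (X + C c) ^ ∑ i ∈ range p, p ^ i - 1)
  have hG_dvd (c : ZMod p) : G ∣ (X + C c) ^ ∑ i ∈ range p, p ^ i - 1 := gcd_dvd (mem_univ c)
  have hG_sep : G.Separable := by
    have hn : ((∑ i ∈ range p, p ^ i : ℕ) : ZMod p) ≠ 0 := by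
      rw [ZMod.natCast_sum_range_pow]
      exact one_ne_zero
    have hG_dvd_zero := hG_dvd 0
    rw [map_zero, add_zero] at hG_dvd_zero
    exact (X_pow_sub_one_separable_iff.2 hn).of_dvd hG_dvd_zero
  have hGW : G ∣ X ^ p - X - 1 := by
    refine hG_sep.dvd_of_forall_aeval_eq_zero (K := AlgebraicClosure (ZMod p)) fun α hα => ?_
    refine (aeval_X_pow_sub_X_sub_one_eq_zero_iff α).2 fun c => ?_
    exact (aeval_X_add_C_pow_sub_one_eq_zero_iff α c _).1
      (aeval_eq_zero_of_dvd_aeval_eq_zero (hG_dvd c) hα)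
  exact dvd_antisymm_of_normalize_eq Finset.normalize_gcd
    monic_X_pow_sub_X_sub_one.normalize_eq_self hGW
    (Finset.dvd_gcd fun c _ => X_pow_sub_X_sub_one_dvd c)

theorem ncard_setOf_forall_add_pow_sum_range_pow_eq_one :
    {α : AlgebraicClosure (ZMod p) | ∀ c : ZMod p,
      (α + algebraMap (ZMod p) (AlgebraicClosure (ZMod p)) c) ^ ∑ i ∈ range p, p ^ i = 1}.ncard
      = p := by
  have hset : {α : AlgebraicClosure (ZMod p) | ∀ c : ZMod p,
      (α + algebraMap (ZMod p) (AlgebraicClosure (ZMod p)) c) ^ ∑ i ∈ range p, p ^ i = 1} =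
      (X ^ p - X - 1 : (ZMod p)[X]).rootSet (AlgebraicClosure (ZMod p)) := by
    ext α
    rw [mem_rootSet_of_ne monic_X_pow_sub_X_sub_one.ne_zero, aeval_X_pow_sub_X_sub_one_eq_zero_iff]
    rfl
  rw [hset, ← Nat.card_coe_set_eq, Nat.card_eq_fintype_card,
    card_rootSet_eq_natDegree separable_X_pow_sub_X_sub_one (IsAlgClosed.splits _)]
  simpa using natDegree_X_pow_sub_X_sub_C (Fact.out : p.Prime).one_lt (1 : ZMod p)

end

theorem stmt_19 (p : ℕ) [Fact p.Prime] (n : ℕ) (hn : n = (p ^ p - 1) / (p - 1)) :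
    Finset.univ.gcd (fun lam : ZMod p => ((X + C lam) ^ n - 1 : Polynomial (ZMod p))) =
        X ^ p - X - 1 ∧
      Set.ncard {α : AlgebraicClosure (ZMod p) |
          ∀ lam : ZMod p,
            (α + algebraMap (ZMod p) (AlgebraicClosure (ZMod p)) lam) ^ n = 1} = p := by
  obtain rfl : n = ∑ i ∈ range p, p ^ i := by
    rw [hn, Nat.geomSum_eq (Fact.out : p.Prime).two_le]
  exact ⟨gcd_X_add_C_pow_sum_range_pow_sub_one, ncard_setOf_forall_add_pow_sum_range_pow_eq_one⟩
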